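/- With ε > 0, and cones C_1, …, C_c of opening angle θ chosen small enough that the quantitative cone inequality holds (for q, q̂ in a common cone of apex p with ⟨x_l, q̂ - p⟩ ≤ ⟨x_l, q - p⟩ one has |p q̂| ≤ (1+ε)|pq|), and CSPDs Ψ_{C_l} for each cone, define the RNN graph as G(P, ⋃_l E_l) where E_l = {(b_i, r_i)} as above. Then for every p ∈ P with |P| ≥ 2, there exists an edge (p, q̂) in the RNN graph such that q̂ is a (1+ε)-nearest neighbor of p. -/

import Mathlib

/-!
Let `q` be a nearest neighbour of `p`, `C l` a cone containing `q - p`, and `(B l i, R l i)` the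
pair separating `p ∈ B l i` from `q ∈ R l i`. If `b l i ≠ p`, then `b l i` projects strictly further
along `x l` than `p`; since both `q - p` and `q - b l i` lie in a cone of half-angle `π/6`, this
forces `|p b l i| < |p q|`, contradicting the choice of `q`. So the pair contributes the edge
`(p, r l i)`, and `r l i` projects no further than `q`, so the cone inequality gives
`|p r l i| ≤ (1 + ε) |p q|`.
-/

open Real InnerProductGeometry RealInnerProductSpace

section

variable {E : Type*} [NormedAddCommGroup E] [InnerProductSpace ℝ E]

theorem inner_sub_smul_sub_smul_of_norm_eq_one {x : E} (hx : ‖x‖ = 1) (u w : E) :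
    ⟪u - ⟪x, u⟫ • x, w - ⟪x, w⟫ • x⟫ = ⟪u, w⟫ - ⟪x, u⟫ * ⟪x, w⟫ := by
  have hxx : ⟪x, x⟫ = 1 := by rw [real_inner_self_eq_norm_sq, hx, one_pow]
  simp only [inner_sub_left, inner_sub_right, real_inner_smul_left, real_inner_smul_right,
    hxx, real_inner_comm x]
  ring

theorem sqrt_three_div_two_mul_norm_le_inner {x u : E} (hx : ‖x‖ = 1)
    (hu : angle u x ≤ π / 6) : √3 / 2 * ‖u‖ ≤ ⟪x, u⟫ := by
  have hcos : Real.cos (π / 6) ≤ Real.cos (angle u x) :=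
    Real.cos_le_cos_of_nonneg_of_le_pi (angle_nonneg u x) (by linarith [Real.pi_pos]) hu
  rw [Real.cos_pi_div_six] at hcos
  calc √3 / 2 * ‖u‖ ≤ Real.cos (angle u x) * (‖u‖ * ‖x‖) := by
        rw [hx, mul_one]; exact mul_le_mul_of_nonneg_right hcos (norm_nonneg u)
    _ = ⟪x, u⟫ := by rw [cos_angle_mul_norm_mul_norm, real_inner_comm]

/-- Write `u = ⟪x, u⟫ x + u'` and `w = ⟪x, w⟫ x + w'`: the `π/6` cone bounds `‖u'‖ ≤ ⟪x, u⟫ / √3`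
and `‖w'‖ ≤ ⟪x, w⟫ / √3`, so `2 ⟪u, w⟫ ≥ 4/3 ⟪x, u⟫ ⟪x, w⟫ > 4/3 ⟪x, w⟫² ≥ ‖w‖²`. -/
theorem norm_sub_lt_norm_of_inner_lt {x u w : E} (hx : ‖x‖ = 1)
    (hu : angle u x ≤ π / 6) (hw : angle w x ≤ π / 6) (hlt : ⟪x, w⟫ < ⟪x, u⟫) :
    ‖u - w‖ < ‖u‖ := by
  have hw0 : w ≠ 0 := by
    rintro rfl
    rw [angle_zero_left] at hw
    linarith [Real.pi_pos]
  have hs3 : √3 ^ 2 = 3 := Real.sq_sqrt (by norm_num)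
  have hu' := sqrt_three_div_two_mul_norm_le_inner hx hu
  have hw' := sqrt_three_div_two_mul_norm_le_inner hx hw
  have horth := inner_sub_smul_sub_smul_of_norm_eq_one hx u w
  have hnu := inner_sub_smul_sub_smul_of_norm_eq_one hx u u
  have hnw := inner_sub_smul_sub_smul_of_norm_eq_one hx w w
  rw [real_inner_self_eq_norm_sq, real_inner_self_eq_norm_sq] at hnu hnw
  set su := ⟪x, u⟫
  set sw := ⟪x, w⟫
  have hsw : 0 < sw := lt_of_lt_of_le (by positivity [norm_pos_iff.mpr hw0]) hw'
  have hsu : 0 < su := hsw.trans hlt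
  have hu2 : 3 * ‖u‖ ^ 2 ≤ 4 * su ^ 2 := by
    nlinarith [mul_le_mul hu' hu' (by positivity) hsu.le]
  have hw2 : 3 * ‖w‖ ^ 2 ≤ 4 * sw ^ 2 := by
    nlinarith [mul_le_mul hw' hw' (by positivity) hsw.le]
  set u' := u - su • x
  set w' := w - sw • x
  have hcs : |⟪u', w'⟫| ≤ ‖u'‖ * ‖w'‖ := abs_real_inner_le_norm u' w'
  have hprod : (‖u'‖ * ‖w'‖) ^ 2 ≤ (su * sw / 3) ^ 2 := by
    rw [mul_pow, hnu, hnw]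
    nlinarith [mul_le_mul (show ‖u‖ ^ 2 - su * su ≤ su ^ 2 / 3 by linarith)
      (show ‖w‖ ^ 2 - sw * sw ≤ sw ^ 2 / 3 by linarith) (hnw ▸ sq_nonneg _) (by positivity)]
  have hprod' : ‖u'‖ * ‖w'‖ ≤ su * sw / 3 :=
    (pow_le_pow_iff_left₀ (by positivity) (by positivity) two_ne_zero).mp hprod
  have hsq : ‖u - w‖ ^ 2 < ‖u‖ ^ 2 := by
    rw [norm_sub_sq_real]
    nlinarith [neg_abs_le ⟪u', w'⟫, mul_lt_mul_of_pos_right hlt hsw]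
  exact lt_of_pow_lt_pow_left₀ 2 (norm_nonneg u) hsq

theorem dist_lt_dist_of_angle_le_pi_div_six {x p b q : E} (hx : ‖x‖ = 1)
    (hp : angle (q - p) x ≤ π / 6) (hb : angle (q - b) x ≤ π / 6) (hlt : ⟪x, p⟫ < ⟪x, b⟫) :
    dist p b < dist p q := by
  have h := norm_sub_lt_norm_of_inner_lt hx hp hb (by simp only [inner_sub_right]; linarith)
  rwa [sub_sub_sub_cancel_left, ← dist_eq_norm', ← dist_eq_norm'] at h

end

/-- Lemma 9: in the RNN graph built from CSPDs for cones `C l` of opening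
angle `θ ≤ π/3` (narrow enough that the quantitative cone inequality holds) covering
`ℝ^d \ {0}`, every point `p` of `P` (with `|P| ≥ 2`) has an incident RNN edge `(p, q̂)`
whose other endpoint `q̂` is a `(1+ε)`-nearest neighbor of `p`. -/
theorem stmt7 {d c : ℕ} (ε : ℝ) (hε : 0 < ε)
    (P : Finset (EuclideanSpace ℝ (Fin d))) (hcard : 2 ≤ P.card)
    (C : Fin c → Set (EuclideanSpace ℝ (Fin d)))
    (x : Fin c → EuclideanSpace ℝ (Fin d)) (hx : ∀ l, ‖x l‖ = 1)
    (θ : ℝ) (hθ : θ ≤ Real.pi / 3)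
    (hcone : ∀ l, ∀ u ∈ C l, u ≠ 0 → InnerProductGeometry.angle u (x l) ≤ θ / 2)
    (h0 : ∀ l, (0 : EuclideanSpace ℝ (Fin d)) ∉ C l)
    (hcover : ∀ v : EuclideanSpace ℝ (Fin d), v ≠ 0 → ∃ l, v ∈ C l)
    -- the quantitative cone inequality (θ is small enough relative to ε):
    (hquant : ∀ l, ∀ p a b : EuclideanSpace ℝ (Fin d), a - p ∈ C l → b - p ∈ C l →
      (inner ℝ (x l) (b - p) : ℝ) ≤ (inner ℝ (x l) (a - p) : ℝ) →
      dist p b ≤ (1 + ε) * dist p a)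
    (hdistinct : ∀ l, Set.InjOn (fun a => (inner ℝ (x l) a : ℝ))
      (P : Set (EuclideanSpace ℝ (Fin d))))
    -- a CSPD for each cone:
    (m : Fin c → ℕ) (B R : ∀ l : Fin c, Fin (m l) → Finset (EuclideanSpace ℝ (Fin d)))
    (hBP : ∀ l i, B l i ⊆ P) (hRP : ∀ l i, R l i ⊆ P)
    (ha : ∀ l, ∀ p ∈ P, ∀ q ∈ P, q - p ∈ C l → ∃! i : Fin (m l), p ∈ B l i ∧ q ∈ R l i)
    (hb : ∀ l, ∀ i : Fin (m l), ∀ p ∈ B l i, ∀ q ∈ R l i, q - p ∈ C l)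
    -- the RNN endpoints: b l i maximizes and r l i minimizes the x l-projection:
    (b r : ∀ l : Fin c, Fin (m l) → EuclideanSpace ℝ (Fin d))
    (hbmax : ∀ l i, b l i ∈ B l i ∧
      ∀ a ∈ B l i, (inner ℝ (x l) a : ℝ) ≤ (inner ℝ (x l) (b l i) : ℝ))
    (hrmin : ∀ l i, r l i ∈ R l i ∧
      ∀ a ∈ R l i, (inner ℝ (x l) (r l i) : ℝ) ≤ (inner ℝ (x l) a : ℝ)) :
    ∀ p ∈ P, ∃ (l : Fin c) (i : Fin (m l)),
      b l i = p ∧ r l i ∈ P ∧ r l i ≠ p ∧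
        ∀ q ∈ P, q ≠ p → dist p (r l i) ≤ (1 + ε) * dist p q := by
  intro p hp
  have hnarrow : ∀ l, ∀ u ∈ C l, angle u (x l) ≤ π / 6 := fun l u hu =>
    (hcone l u hu (ne_of_mem_of_not_mem hu (h0 l))).trans (by linarith)
  obtain ⟨q, hq, hqmin⟩ := (P.erase p).exists_min_image (dist p)
    (by rw [← Finset.card_pos, Finset.card_erase_of_mem hp]; omega)
  obtain ⟨hqp, hqP⟩ := Finset.mem_erase.mp hq
  obtain ⟨l, hl⟩ := hcover (q - p) (sub_ne_zero.mpr hqp)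
  obtain ⟨i, ⟨hpB, hqR⟩, -⟩ := ha l p hp q hqP hl
  obtain ⟨hbB, hbmax⟩ := hbmax l i
  obtain ⟨hrR, hrmin⟩ := hrmin l i
  have hbp : b l i = p := by
    by_contra hne
    have hlt : ⟪x l, p⟫ < ⟪x l, b l i⟫ :=
      (hbmax p hpB).lt_of_ne fun h => hne (hdistinct l (hBP l i hbB) hp h.symm)
    exact (hqmin (b l i) (Finset.mem_erase.mpr ⟨hne, hBP l i hbB⟩)).not_gt
      (dist_lt_dist_of_angle_le_pi_div_six (hx l) (hnarrow l _ hl)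
        (hnarrow l _ (hb l i _ hbB q hqR)) hlt)
  have hrC : r l i - p ∈ C l := hb l i p hpB _ hrR
  refine ⟨l, i, hbp, hRP l i hrR, fun h => h0 l (by rwa [h, sub_self] at hrC), ?_⟩
  intro q' hq'P hq'p
  calc dist p (r l i) ≤ (1 + ε) * dist p q :=
        hquant l p q (r l i) hl hrC (by simp only [inner_sub_right]; linarith [hrmin q hqR])
    _ ≤ (1 + ε) * dist p q' :=
        mul_le_mul_of_nonneg_left (hqmin q' (Finset.mem_erase.mpr ⟨hq'p, hq'P⟩)) (by linarith)
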